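/- On ℝ (i.e. d = 1), let μ = δ_0, ν = δ_1 and α = b · Leb|_{[0,1]} for b ≥ 1, and let p ≥ 1. Then W_p(α + μ, α + ν)^p = b^{−p} ( b − 1 + 2/(p+1) ). In particular, W_p(α + μ, α + ν) → 0 as b → ∞ for every p > 1, so that the identity W_1(α+μ, α+ν) = W_1(μ,ν) fails for every p > 1. -/

import Mathlib

open MeasureTheory ENNReal Filter

noncomputable section

/-- The Wasserstein distance of order `p` between finite measures of equal total mass
on `ℝ`: the `p`-th root of the infimum of `∫ |x - y|^p dπ` over all couplings `π`. -/
def Wp (p : ℝ) (μ ν : Measure ℝ) : ℝ≥0∞ :=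
  (⨅ (π : Measure (ℝ × ℝ)) (_ : π.map Prod.fst = μ) (_ : π.map Prod.snd = ν),
    ∫⁻ z, ENNReal.ofReal (|z.1 - z.2| ^ p) ∂π) ^ (1 / p)

/-! Write `h = 1 / b`. The monotone coupling spreads the atom at `0` over `[0, h]`, shifts the
mass on `[0, 1 - h]` by `h` and sends the mass on `[1 - h, 1]` to the atom at `1`; its cost is
`b (2 h ^ (p + 1) / (p + 1) + h ^ p (1 - h)) = b ^ (-p) (b - 1 + 2 / (p + 1))`.
It is optimal by Kantorovich duality: with `ψ(y) = y ^ p` on `[0, h]`, continued by its tangent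
line at `h`, the potentials `x ↦ ψ (1 - x)` and `ψ` satisfy `ψ (1 - x) + ψ y ≤ |x - y| ^ p + ψ 1`
on `[0, 1]²` (by convexity of `t ↦ t ^ p`), with equality on the support of the coupling.
Since `W_p^p ≤ b ^ (1 - p) → 0` while `W_p(δ₀, δ₁) ≥ 1`, the identity fails for `p > 1`. -/

open Set

section RpowConvexity

variable {p : ℝ}

theorem rpow_add_mul_sub_le (hp : 1 ≤ p) {s t : ℝ} (hs : 0 ≤ s) (ht : 0 ≤ t) :
    s ^ p + p * s ^ (p - 1) * (t - s) ≤ t ^ p := by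
  rcases hs.eq_or_lt with rfl | hs
  · rcases hp.eq_or_lt with rfl | hp
    · simp
    · simpa [Real.zero_rpow (by linarith : p ≠ 0), Real.zero_rpow (by linarith : p - 1 ≠ 0)]
        using Real.rpow_nonneg ht p
  · have hb := one_add_mul_self_le_rpow_one_add (s := t / s - 1)
      (by linarith [div_nonneg ht hs.le]) hp
    rw [add_sub_cancel, Real.div_rpow ht hs.le, le_div_iff₀ (by positivity)] at hb
    calc s ^ p + p * s ^ (p - 1) * (t - s) = (1 + p * (t / s - 1)) * s ^ p := by
          rw [Real.rpow_sub hs, Real.rpow_one]; field_simp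
      _ ≤ t ^ p := hb

theorem rpow_le_rpow_add_mul (hp : 1 ≤ p) {s t h d : ℝ} (hs : 0 ≤ s) (hsh : s ≤ h) (ht : 0 ≤ t)
    (hd : 0 ≤ d) (hstd : s - t ≤ d) : s ^ p ≤ t ^ p + p * h ^ (p - 1) * d := by
  have hh : 0 ≤ h := hs.trans hsh
  rcases le_total s t with hst | hts
  · have hmul : 0 ≤ p * h ^ (p - 1) * d := by positivity
    linarith [Real.rpow_le_rpow hs hst (by linarith : 0 ≤ p)]
  · have hslope : p * s ^ (p - 1) * (s - t) ≤ p * h ^ (p - 1) * d := by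
      gcongr
    linarith [rpow_add_mul_sub_le hp hs ht]

theorem rpow_add_rpow_le_of_add_eq (hp : 1 ≤ p) {c d u y : ℝ} (hc : 0 ≤ c) (hcu : c ≤ u)
    (hcy : c ≤ y) (hud : u ≤ d) (hyd : y ≤ d) (hsum : u + y = c + d) :
    u ^ p + y ^ p ≤ c ^ p + d ^ p := by
  wlog huy : u ≤ y generalizing u y
  · linarith [this hcy hcu hyd hud (by linarith) (by linarith)]
  have hu : 0 ≤ u := hc.trans hcu
  have hslope : p * u ^ (p - 1) * (u - c) ≤ p * y ^ (p - 1) * (d - y) := by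
    rw [show d - y = u - c by linarith]
    gcongr
  linarith [rpow_add_mul_sub_le hp hu hc,
    rpow_add_mul_sub_le hp (hu.trans huy) (hc.trans (hcu.trans hud))]

end RpowConvexity

/-- The Kantorovich potential of the target measure; that of the source measure is
`x ↦ cutoffPotential p h (1 - x)`. -/
def cutoffPotential (p h y : ℝ) : ℝ :=
  if y < h then |y| ^ p else h ^ p + p * h ^ (p - 1) * (y - h)

section CutoffPotential

variable {p h : ℝ}

theorem cutoffPotential_of_le (hh : 0 ≤ h) {y : ℝ} (hy : y ≤ h) :
    cutoffPotential p h y = |y| ^ p := by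
  rcases hy.lt_or_eq with hy | rfl
  · exact if_pos hy
  · simp [cutoffPotential, abs_of_nonneg hh]

theorem cutoffPotential_of_ge {y : ℝ} (hy : h ≤ y) :
    cutoffPotential p h y = h ^ p + p * h ^ (p - 1) * (y - h) :=
  if_neg hy.not_gt

theorem cutoffPotential_nonneg (hp : 0 ≤ p) (hh : 0 ≤ h) (y : ℝ) : 0 ≤ cutoffPotential p h y := by
  rcases lt_or_ge y h with hy | hy
  · rw [cutoffPotential_of_le hh hy.le]
    positivity
  · rw [cutoffPotential_of_ge hy]
    have : 0 ≤ y - h := by linarith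
    positivity

@[fun_prop]
theorem measurable_cutoffPotential : Measurable (cutoffPotential p h) :=
  Measurable.ite (measurableSet_lt measurable_id measurable_const) (by fun_prop) (by fun_prop)

theorem cutoffPotential_add_le (hp : 1 ≤ p) (h0 : 0 < h) (h1 : h ≤ 1) {u y : ℝ}
    (hu : u ∈ Icc (0 : ℝ) 1) (hy : y ∈ Icc (0 : ℝ) 1) :
    cutoffPotential p h u + cutoffPotential p h y ≤ |1 - u - y| ^ p + cutoffPotential p h 1 := by
  wlog huy : u ≤ y generalizing u y
  · rw [add_comm, show 1 - u - y = 1 - y - u by ring]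
    exact this hy hu (le_of_not_ge huy)
  have hψ1 := cutoffPotential_of_ge (p := p) h1
  have hw : u + y - 1 ≤ |1 - u - y| := by linarith [neg_le_abs (1 - u - y)]
  rcases lt_or_ge y h with hyh | hhy
  · rw [cutoffPotential_of_le h0.le (huy.trans hyh.le), cutoffPotential_of_le h0.le hyh.le,
      abs_of_nonneg hu.1, abs_of_nonneg hy.1, hψ1]
    -- `(u, y)` is majorized by `(s, u + y - s)`, whose entries lie in `[0, h]`
    set s := max 0 (u + y - h)
    have hsu : s ≤ u := max_le hu.1 (by linarith)
    have hsy : s ≤ y := max_le hy.1 (by linarith)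
    have hmaj : u ^ p + y ^ p ≤ s ^ p + (u + y - s) ^ p :=
      rpow_add_rpow_le_of_add_eq hp (le_max_left _ _) hsu hsy (by linarith) (by linarith) (by ring)
    have hrest : (u + y - s) ^ p ≤ h ^ p :=
      Real.rpow_le_rpow (by linarith [hy.1]) (by linarith [le_max_right 0 (u + y - h)])
        (by linarith)
    have hs : s ^ p ≤ |1 - u - y| ^ p + p * h ^ (p - 1) * (1 - h) :=
      rpow_le_rpow_add_mul hp (le_max_left _ _) (max_le h0.le (by linarith)) (abs_nonneg _)
        (by linarith) (by rw [sub_le_iff_le_add]; exact max_le (by positivity) (by linarith))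
    linarith
  rcases lt_or_ge u h with huh | hhu
  · rw [cutoffPotential_of_le h0.le huh.le, cutoffPotential_of_ge hhy, abs_of_nonneg hu.1, hψ1]
    have := rpow_le_rpow_add_mul hp hu.1 huh.le (abs_nonneg (1 - u - y)) (by linarith [hy.2])
      (by linarith : u - |1 - u - y| ≤ 1 - y)
    linarith
  · rw [cutoffPotential_of_ge hhu, cutoffPotential_of_ge hhy, hψ1]
    have htangent := rpow_add_mul_sub_le hp h0.le (abs_nonneg (1 - u - y))
    have := mul_le_mul_of_nonneg_left hw (by positivity : 0 ≤ p * h ^ (p - 1))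
    linarith

end CutoffPotential

theorem lintegral_le_of_potentials {X Y : Type*} [MeasurableSpace X] [MeasurableSpace Y]
    {π₀ π : Measure (X × Y)} (hfst : π₀.map Prod.fst = π.map Prod.fst)
    (hsnd : π₀.map Prod.snd = π.map Prod.snd) {f : X → ℝ≥0∞} {g : Y → ℝ≥0∞}
    {c : X × Y → ℝ≥0∞} (hf : Measurable f) (hg : Measurable g)
    (heq : ∀ᵐ z ∂π₀, c z = f z.1 + g z.2) (hle : ∀ᵐ z ∂π, f z.1 + g z.2 ≤ c z) :
    ∫⁻ z, c z ∂π₀ ≤ ∫⁻ z, c z ∂π := by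
  have hsplit (ρ : Measure (X × Y)) : ∫⁻ z, f z.1 + g z.2 ∂ρ
      = ∫⁻ x, f x ∂(ρ.map Prod.fst) + ∫⁻ y, g y ∂(ρ.map Prod.snd) := by
    rw [lintegral_add_left (f := fun z : X × Y => f z.1) (hf.comp measurable_fst),
      lintegral_map hf measurable_fst, lintegral_map hg measurable_snd]
  calc ∫⁻ z, c z ∂π₀ = ∫⁻ z, f z.1 + g z.2 ∂π₀ := lintegral_congr_ae heq
    _ = ∫⁻ z, f z.1 + g z.2 ∂π := by rw [hsplit, hsplit, hfst, hsnd]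
    _ ≤ ∫⁻ z, c z ∂π := lintegral_mono_ae hle

theorem map_add_const_restrict_Ioc (a b c : ℝ) :
    (volume.restrict (Ioc b c)).map (· + a) = volume.restrict (Ioc (b + a) (c + a)) := by
  have := ((measurePreserving_add_right volume a).restrict_preimage_emb
    (measurableEmbedding_addRight a) (Ioc (b + a) (c + a))).map_eq
  rwa [preimage_add_const_Ioc, add_sub_cancel_right, add_sub_cancel_right] at this

theorem map_const_sub_restrict_Ico (a b c : ℝ) :
    (volume.restrict (Ico b c)).map (a - ·) = volume.restrict (Ioc (a - c) (a - b)) := by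
  have := ((Measure.measurePreserving_sub_left volume a).restrict_preimage_emb
    (measurableEmbedding_subLeft a) (Ioc (a - c) (a - b))).map_eq
  rwa [preimage_const_sub_Ioc, sub_sub_self a b, sub_sub_self a c] at this

theorem setLIntegral_Icc_abs_rpow {p h : ℝ} (hp : 0 ≤ p) (hh : 0 ≤ h) :
    ∫⁻ t in Icc 0 h, ENNReal.ofReal (|t| ^ p) = ENNReal.ofReal (h ^ (p + 1) / (p + 1)) := by
  rw [← ofReal_integral_eq_lintegral_ofReal, integral_Icc_eq_integral_Ioc,
    ← intervalIntegral.integral_of_le hh]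
  · rw [intervalIntegral.integral_congr (g := fun t => t ^ p) fun t ht => by
      rw [uIcc_of_le hh] at ht; rw [abs_of_nonneg ht.1], integral_rpow (by left; linarith),
      Real.zero_rpow (by linarith), sub_zero]
  · exact (continuous_abs.rpow_const fun _ => Or.inr hp).integrableOn_Icc
  · exact ae_of_all _ fun t => by positivity

theorem map_fst_apply_univ {X Y : Type*} [MeasurableSpace X] [MeasurableSpace Y]
    (ρ : Measure (X × Y)) : ρ.map Prod.fst univ = ρ univ := by
  rw [Measure.map_apply measurable_fst MeasurableSet.univ, preimage_univ]

def transportCost (p : ℝ) (π : Measure (ℝ × ℝ)) : ℝ≥0∞ :=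
  ∫⁻ z, ENNReal.ofReal (|z.1 - z.2| ^ p) ∂π

def uniformAddDirac (b a : ℝ) : Measure ℝ :=
  ENNReal.ofReal b • volume.restrict (Icc (0 : ℝ) 1) + Measure.dirac a

/-- Up to the factor `b = h⁻¹`, the monotone coupling of `uniformAddDirac b 0` with
`uniformAddDirac b 1`. -/
def shiftCoupling (h : ℝ) : Measure (ℝ × ℝ) :=
  (volume.restrict (Ioc 0 h)).map (fun t => (0, t))
    + (volume.restrict (Ioc 0 (1 - h))).map (fun t => (t, t + h))
    + (volume.restrict (Ico 0 h)).map (fun t => (1 - t, 1))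

section ShiftCoupling

variable {h : ℝ}

theorem map_fst_shiftCoupling (h0 : 0 ≤ h) (h1 : h ≤ 1) :
    (shiftCoupling h).map Prod.fst
      = ENNReal.ofReal h • Measure.dirac 0 + volume.restrict (Icc 0 1) := by
  simp only [shiftCoupling, Measure.map_add _ _ measurable_fst]
  rw [Measure.map_map measurable_fst (by fun_prop), Measure.map_map measurable_fst (by fun_prop),
    Measure.map_map measurable_fst (by fun_prop)]
  simp only [Function.comp_def]
  rw [Measure.map_const, Measure.map_id', map_const_sub_restrict_Ico, sub_zero,
    Measure.restrict_apply_univ, Real.volume_Ioc, sub_zero, add_assoc,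
    ← Measure.restrict_union (Ioc_disjoint_Ioc_of_le le_rfl) measurableSet_Ioc,
    Ioc_union_Ioc_eq_Ioc (by linarith) (by linarith), Measure.restrict_congr_set Ioc_ae_eq_Icc]

theorem map_snd_shiftCoupling (h0 : 0 ≤ h) (h1 : h ≤ 1) :
    (shiftCoupling h).map Prod.snd
      = volume.restrict (Icc 0 1) + ENNReal.ofReal h • Measure.dirac 1 := by
  simp only [shiftCoupling, Measure.map_add _ _ measurable_snd]
  rw [Measure.map_map measurable_snd (by fun_prop), Measure.map_map measurable_snd (by fun_prop),
    Measure.map_map measurable_snd (by fun_prop)]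
  simp only [Function.comp_def]
  rw [Measure.map_const, Measure.map_id', map_add_const_restrict_Ioc, zero_add, sub_add_cancel,
    Measure.restrict_apply_univ, Real.volume_Ico, sub_zero,
    ← Measure.restrict_union (Ioc_disjoint_Ioc_of_le le_rfl) measurableSet_Ioc,
    Ioc_union_Ioc_eq_Ioc h0 h1, Measure.restrict_congr_set Ioc_ae_eq_Icc]

theorem transportCost_shiftCoupling {p : ℝ} (hp : 0 ≤ p) (h0 : 0 ≤ h) (h1 : h ≤ 1) :
    transportCost p (shiftCoupling h)
      = ENNReal.ofReal (h ^ (p + 1) / (p + 1) + h ^ p * (1 - h) + h ^ (p + 1) / (p + 1)) := by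
  have hcost : Measurable fun z : ℝ × ℝ => ENNReal.ofReal (|z.1 - z.2| ^ p) := by fun_prop
  simp only [transportCost, shiftCoupling, lintegral_add_measure]
  rw [lintegral_map hcost (by fun_prop), lintegral_map hcost (by fun_prop),
    lintegral_map hcost (by fun_prop)]
  simp only [zero_sub, abs_neg, sub_add_cancel_left, sub_sub_cancel_left, abs_of_nonneg h0,
    setLIntegral_const, Real.volume_Ioc, sub_zero]
  rw [setLIntegral_congr Ioc_ae_eq_Icc, setLIntegral_congr Ico_ae_eq_Icc,
    setLIntegral_Icc_abs_rpow hp h0, ← ENNReal.ofReal_mul (by positivity)]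
  have hend : 0 ≤ h ^ (p + 1) / (p + 1) := by positivity
  have hbulk : 0 ≤ h ^ p * (1 - h) := mul_nonneg (by positivity) (by linarith)
  rw [← ENNReal.ofReal_add hend hbulk, ← ENNReal.ofReal_add (add_nonneg hend hbulk) hend]

end ShiftCoupling

theorem ae_shiftCoupling {h : ℝ} {P : ℝ × ℝ → Prop} (hP : MeasurableSet {z | P z})
    (hatom : ∀ t ∈ Ioc 0 h, P (0, t)) (hshift : ∀ t ∈ Ioc 0 (1 - h), P (t, t + h))
    (hend : ∀ t ∈ Ico 0 h, P (1 - t, 1)) : ∀ᵐ z ∂shiftCoupling h, P z := by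
  simp only [shiftCoupling, ae_add_measure_iff]
  refine ⟨⟨?_, ?_⟩, ?_⟩ <;> rw [ae_map_iff (by fun_prop) hP]
  · exact ae_restrict_of_forall_mem measurableSet_Ioc hatom
  · exact ae_restrict_of_forall_mem measurableSet_Ioc hshift
  · exact ae_restrict_of_forall_mem measurableSet_Ico hend

theorem ae_uniformAddDirac_mem_Icc {b a : ℝ} (ha : a ∈ Icc (0 : ℝ) 1) :
    ∀ᵐ x ∂uniformAddDirac b a, x ∈ Icc (0 : ℝ) 1 :=
  ae_add_measure_iff.2 ⟨Measure.ae_smul_measure (ae_restrict_mem measurableSet_Icc) _,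
    (ae_dirac_iff measurableSet_Icc).2 ha⟩

section Rescaled

variable {p b : ℝ}

theorem map_fst_smul_shiftCoupling (hb : 1 ≤ b) :
    (ENNReal.ofReal b • shiftCoupling b⁻¹).map Prod.fst = uniformAddDirac b 0 := by
  rw [Measure.map_smul, map_fst_shiftCoupling (by positivity) (inv_le_one_of_one_le₀ hb), smul_add,
    smul_smul, ← ENNReal.ofReal_mul (by linarith), mul_inv_cancel₀ (by linarith),
    ENNReal.ofReal_one, one_smul, add_comm, uniformAddDirac]

theorem map_snd_smul_shiftCoupling (hb : 1 ≤ b) :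
    (ENNReal.ofReal b • shiftCoupling b⁻¹).map Prod.snd = uniformAddDirac b 1 := by
  rw [Measure.map_smul, map_snd_shiftCoupling (by positivity) (inv_le_one_of_one_le₀ hb), smul_add,
    smul_smul, ← ENNReal.ofReal_mul (by linarith), mul_inv_cancel₀ (by linarith),
    ENNReal.ofReal_one, one_smul, uniformAddDirac]

theorem transportCost_smul_shiftCoupling (hp : 0 ≤ p) (hb : 1 ≤ b) :
    transportCost p (ENNReal.ofReal b • shiftCoupling b⁻¹)
      = ENNReal.ofReal (b ^ (-p) * (b - 1 + 2 / (p + 1))) := by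
  have hb0 : 0 < b := by linarith
  rw [transportCost, lintegral_smul_measure, ← transportCost,
    transportCost_shiftCoupling hp (by positivity) (inv_le_one_of_one_le₀ hb), smul_eq_mul,
    ← ENNReal.ofReal_mul hb0.le, Real.rpow_add_one (by positivity), Real.rpow_neg hb0.le,
    Real.inv_rpow hb0.le]
  congr 1
  field_simp
  ring

end Rescaled

theorem ae_cutoffPotential_eq_of_shiftCoupling {p h : ℝ} (hp : 0 ≤ p) (h0 : 0 < h) (h1 : h ≤ 1) :
    ∀ᵐ z ∂shiftCoupling h,
      ENNReal.ofReal (|z.1 - z.2| ^ p) + ENNReal.ofReal (cutoffPotential p h 1)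
        = ENNReal.ofReal (cutoffPotential p h (1 - z.1))
          + ENNReal.ofReal (cutoffPotential p h z.2) := by
  have hψ := cutoffPotential_nonneg hp h0.le
  refine ae_shiftCoupling (measurableSet_eq_fun (by fun_prop) (by fun_prop)) ?_ ?_ ?_
  · intro t ht
    rw [sub_zero, zero_sub, abs_neg, cutoffPotential_of_le h0.le ht.2, add_comm]
  · intro t ht
    rw [← ENNReal.ofReal_add (by positivity) (hψ 1), ← ENNReal.ofReal_add (hψ _) (hψ _),
      cutoffPotential_of_ge h1, cutoffPotential_of_ge (by linarith [ht.2] : h ≤ 1 - t),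
      cutoffPotential_of_ge (by linarith [ht.1] : h ≤ t + h), sub_add_cancel_left, abs_neg,
      abs_of_pos h0]
    congr 1
    ring
  · intro t ht
    rw [sub_sub_self, sub_sub_cancel_left, abs_neg, cutoffPotential_of_le h0.le ht.2.le]

theorem transportCost_smul_shiftCoupling_le {p b : ℝ} (hp : 1 ≤ p) (hb : 1 ≤ b)
    {π : Measure (ℝ × ℝ)} (hπ₁ : π.map Prod.fst = uniformAddDirac b 0)
    (hπ₂ : π.map Prod.snd = uniformAddDirac b 1) :
    transportCost p (ENNReal.ofReal b • shiftCoupling b⁻¹) ≤ transportCost p π := by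
  set h := b⁻¹
  have h0 : 0 < h := by positivity
  have h1 : h ≤ 1 := inv_le_one_of_one_le₀ hb
  have hψ := cutoffPotential_nonneg (by linarith) h0.le (p := p)
  have hdual := lintegral_le_of_potentials (π₀ := ENNReal.ofReal b • shiftCoupling h) (π := π)
    (by rw [map_fst_smul_shiftCoupling hb, hπ₁]) (by rw [map_snd_smul_shiftCoupling hb, hπ₂])
    (c := fun z => ENNReal.ofReal (|z.1 - z.2| ^ p) + ENNReal.ofReal (cutoffPotential p h 1))
    (f := fun x => ENNReal.ofReal (cutoffPotential p h (1 - x)))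
    (g := fun y => ENNReal.ofReal (cutoffPotential p h y)) (by fun_prop) (by fun_prop)
    (Measure.ae_smul_measure (ae_cutoffPotential_eq_of_shiftCoupling (by linarith) h0 h1) _) ?_
  · rw [lintegral_add_right _ measurable_const, lintegral_add_right _ measurable_const,
      lintegral_const, lintegral_const, ← map_fst_apply_univ π, ← map_fst_apply_univ,
      map_fst_smul_shiftCoupling hb, hπ₁] at hdual
    refine (ENNReal.add_le_add_iff_right (mul_ne_top ofReal_ne_top ?_)).1 hdual
    simp [uniformAddDirac]
  · have hmem₁ : ∀ᵐ z ∂π, z.1 ∈ Icc (0 : ℝ) 1 := ae_of_ae_map measurable_fst.aemeasurable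
      (hπ₁ ▸ ae_uniformAddDirac_mem_Icc ⟨le_rfl, zero_le_one⟩)
    have hmem₂ : ∀ᵐ z ∂π, z.2 ∈ Icc (0 : ℝ) 1 := ae_of_ae_map measurable_snd.aemeasurable
      (hπ₂ ▸ ae_uniformAddDirac_mem_Icc ⟨zero_le_one, le_rfl⟩)
    filter_upwards [hmem₁, hmem₂] with z hz₁ hz₂
    rw [← ENNReal.ofReal_add (hψ _) (hψ _), ← ENNReal.ofReal_add (by positivity) (hψ _)]
    apply ENNReal.ofReal_le_ofReal
    have := cutoffPotential_add_le hp h0 h1 ⟨sub_nonneg.2 hz₁.2, by linarith [hz₁.1]⟩ hz₂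
    rwa [sub_sub_self] at this

section Wasserstein

variable {p b : ℝ}

theorem iInf_transportCost_uniformAddDirac (hp : 1 ≤ p) (hb : 1 ≤ b) :
    ⨅ (π : Measure (ℝ × ℝ)) (_ : π.map Prod.fst = uniformAddDirac b 0)
      (_ : π.map Prod.snd = uniformAddDirac b 1), transportCost p π
      = ENNReal.ofReal (b ^ (-p) * (b - 1 + 2 / (p + 1))) := by
  rw [← transportCost_smul_shiftCoupling (by linarith) hb]
  exact le_antisymm
    (iInf_le_of_le _ (iInf_le_of_le (map_fst_smul_shiftCoupling hb)
      (iInf_le _ (map_snd_smul_shiftCoupling hb))))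
    (le_iInf fun _ => le_iInf fun hπ₁ => le_iInf fun hπ₂ =>
      transportCost_smul_shiftCoupling_le hp hb hπ₁ hπ₂)

theorem Wp_uniformAddDirac (hp : 1 ≤ p) (hb : 1 ≤ b) :
    Wp p (uniformAddDirac b 0) (uniformAddDirac b 1)
      = ENNReal.ofReal (b ^ (-p) * (b - 1 + 2 / (p + 1))) ^ (1 / p) :=
  congrArg (· ^ (1 / p)) (iInf_transportCost_uniformAddDirac hp hb)

theorem tendsto_rpow_neg_mul_add_atTop (hp : 1 < p) (c : ℝ) :
    Tendsto (fun b : ℝ => b ^ (-p) * (b + c)) atTop (nhds 0) := by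
  have hlim := (tendsto_rpow_neg_atTop (by linarith : 0 < p - 1)).add
    ((tendsto_rpow_neg_atTop (by linarith : 0 < p)).const_mul c)
  rw [mul_zero, add_zero] at hlim
  refine hlim.congr' ?_
  filter_upwards [eventually_gt_atTop 0] with b hb
  rw [neg_sub', sub_neg_eq_add, Real.rpow_add_one hb.ne']
  ring

theorem tendsto_Wp_uniformAddDirac (hp : 1 < p) :
    Tendsto (fun b => Wp p (uniformAddDirac b 0) (uniformAddDirac b 1)) atTop (nhds 0) := by
  have hcost : Tendsto (fun b : ℝ => b ^ (-p) * (b - 1 + 2 / (p + 1))) atTop (nhds 0) :=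
    (tendsto_rpow_neg_mul_add_atTop hp (2 / (p + 1) - 1)).congr fun b => by ring
  have hlim := ((ENNReal.continuous_rpow_const (y := 1 / p)).tendsto (ENNReal.ofReal 0)).comp
    (ENNReal.tendsto_ofReal hcost)
  rw [ENNReal.ofReal_zero, ENNReal.zero_rpow_of_pos (by positivity)] at hlim
  exact hlim.congr' (eventually_ge_atTop 1 |>.mono fun b hb => (Wp_uniformAddDirac hp.le hb).symm)

theorem one_le_Wp_dirac_zero_one (hp : 0 < p) : 1 ≤ Wp p (Measure.dirac 0) (Measure.dirac 1) := by
  refine ENNReal.one_le_rpow (le_iInf fun π => le_iInf fun hπ₁ => le_iInf fun hπ₂ => ?_)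
    (by positivity)
  have hfst : ∀ᵐ z ∂π, z.1 = 0 := ae_of_ae_map measurable_fst.aemeasurable
    (hπ₁ ▸ (ae_dirac_iff (measurableSet_singleton 0)).2 rfl)
  have hsnd : ∀ᵐ z ∂π, z.2 = 1 := ae_of_ae_map measurable_snd.aemeasurable
    (hπ₂ ▸ (ae_dirac_iff (measurableSet_singleton 1)).2 rfl)
  calc (1 : ℝ≥0∞) = ∫⁻ _, 1 ∂π := by
        rw [lintegral_const, one_mul, ← map_fst_apply_univ, hπ₁, measure_univ]
    _ ≤ ∫⁻ z, ENNReal.ofReal (|z.1 - z.2| ^ p) ∂π := lintegral_mono_ae <| by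
      filter_upwards [hfst, hsnd] with z hz₁ hz₂
      simp [hz₁, hz₂]

end Wasserstein

/-- On `ℝ`, with `μ = δ₀`, `ν = δ₁` and `α = b·Leb|_{[0,1]}` for
`b ≥ 1`: `W_p(α + μ, α + ν)^p = b^{-p} (b - 1 + 2/(p+1))`. In particular, for every
`p > 1`, `W_p(α + μ, α + ν) → 0` as `b → ∞`, so the identity
`W_p(α + μ, α + ν) = W_p(μ, ν)` fails for every `p > 1`. -/
theorem Wp_add_common_counterexample (p : ℝ) (hp : 1 ≤ p) :
    (∀ b : ℝ, 1 ≤ b →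
      (Wp p (ENNReal.ofReal b • volume.restrict (Set.Icc (0 : ℝ) 1) + Measure.dirac 0)
           (ENNReal.ofReal b • volume.restrict (Set.Icc (0 : ℝ) 1) + Measure.dirac 1)) ^ p
        = ENNReal.ofReal (b ^ (-p) * (b - 1 + 2 / (p + 1)))) ∧
    (1 < p →
      Tendsto
        (fun b : ℝ =>
          Wp p (ENNReal.ofReal b • volume.restrict (Set.Icc (0 : ℝ) 1) + Measure.dirac 0)
               (ENNReal.ofReal b • volume.restrict (Set.Icc (0 : ℝ) 1) + Measure.dirac 1))
        atTop (nhds 0) ∧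
      ∃ b : ℝ, 1 ≤ b ∧
        Wp p (ENNReal.ofReal b • volume.restrict (Set.Icc (0 : ℝ) 1) + Measure.dirac 0)
             (ENNReal.ofReal b • volume.restrict (Set.Icc (0 : ℝ) 1) + Measure.dirac 1)
          ≠ Wp p (Measure.dirac 0) (Measure.dirac 1)) := by
  refine ⟨fun b hb => ?_, fun hp₁ => ⟨tendsto_Wp_uniformAddDirac hp₁, ?_⟩⟩
  · change Wp p (uniformAddDirac b 0) (uniformAddDirac b 1) ^ p = _
    rw [Wp_uniformAddDirac hp hb, ← ENNReal.rpow_mul, one_div_mul_cancel (by linarith),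
      ENNReal.rpow_one]
  · obtain ⟨b, hlt, hb⟩ := ((tendsto_Wp_uniformAddDirac hp₁).eventually_lt_const one_pos |>.and
      (eventually_ge_atTop 1)).exists
    exact ⟨b, hb, (hlt.trans_le (one_le_Wp_dirac_zero_one (by linarith))).ne⟩
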